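/- arXiv:2603.18345 — 2 statements merged into one kernel-verified Lean document; each statement's English description precedes it below -/
import Mathlib

section
/- Data-processing inequality for Fisher information (finite case): if S is generated from X via a θ-independent kernel, then the Fisher information of S alone about θ is bounded by that of X: I_S(θ) ≤ I_X(θ). -/
/-!
For positive `C²` weights, `f · (log f)'' = f'' - f'²/f`, so `I_X = ∑ₓ p'²/p - ∑ₓ p''` and
`I_S = ∑ₛ r'²/r - ∑ₛ r''`. Since `k` is stochastic and `θ`-free, `∑ₛ r'' = ∑ₓ p''`, and
`r' = ∑ₓ p' k`; the claim reduces to `∑ₛ (∑ₓ p' k)² / ∑ₓ p k ≤ ∑ₓ p'²/p`, which is Sedrakyan's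
form of Cauchy–Schwarz in `x` for each `s`, summed over `s` using `∑ₛ k = 1`.
-/

open Finset Filter Topology

section Calculus

variable {f : ℝ → ℝ} {θ : ℝ}

lemma ContDiffAt.differentiableAt_deriv (h : ContDiffAt ℝ 2 f θ) :
    DifferentiableAt ℝ (deriv f) θ :=
  (h.derivWithin (m := 1) (by norm_num)).differentiableAt one_ne_zero

lemma ContDiffAt.eventually_differentiableAt (h : ContDiffAt ℝ 2 f θ) :
    ∀ᶠ t in 𝓝 θ, DifferentiableAt ℝ f t := by
  filter_upwards [h.eventually (by simp)] with t ht
  exact ht.differentiableAt two_ne_zero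

lemma mul_deriv_deriv_log (h : ContDiffAt ℝ 2 f θ) (hpos : 0 < f θ) :
    f θ * deriv (deriv fun t => Real.log (f t)) θ
      = deriv (deriv f) θ - deriv f θ ^ 2 / f θ := by
  have hpos_near : ∀ᶠ t in 𝓝 θ, 0 < f t :=
    h.continuousAt.eventually (lt_mem_nhds hpos)
  have hlog : deriv (fun t => Real.log (f t)) =ᶠ[𝓝 θ] fun t => deriv f t / f t := by
    filter_upwards [h.eventually_differentiableAt, hpos_near] with t hdt hft
    exact (hdt.hasDerivAt.log hft.ne').deriv
  rw [hlog.deriv_eq, deriv_fun_div h.differentiableAt_deriv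
    (h.differentiableAt two_ne_zero) hpos.ne']
  field_simp

lemma deriv_deriv_fun_sum {ι : Type*} {s : Finset ι} {g : ι → ℝ → ℝ}
    (h : ∀ i ∈ s, ContDiffAt ℝ 2 (g i) θ) :
    deriv (deriv fun t => ∑ i ∈ s, g i t) θ = ∑ i ∈ s, deriv (deriv (g i)) θ := by
  have hdiff : ∀ᶠ t in 𝓝 θ, ∀ i ∈ s, DifferentiableAt ℝ (g i) t :=
    (eventually_all_finset s).2 fun i hi => (h i hi).eventually_differentiableAt
  have hderiv : deriv (fun t => ∑ i ∈ s, g i t) =ᶠ[𝓝 θ] fun t => ∑ i ∈ s, deriv (g i) t := by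
    filter_upwards [hdiff] with t ht
    exact deriv_fun_sum ht
  rw [hderiv.deriv_eq, deriv_fun_sum fun i hi => (h i hi).differentiableAt_deriv]

end Calculus

lemma deriv_fun_sum_mul_const {ι : Type*} {s : Finset ι} {g : ι → ℝ → ℝ} {θ : ℝ}
    (h : ∀ i ∈ s, DifferentiableAt ℝ (g i) θ) (c : ι → ℝ) :
    deriv (fun t => ∑ i ∈ s, g i t * c i) θ = ∑ i ∈ s, deriv (g i) θ * c i := by
  rw [deriv_fun_sum fun i hi => (h i hi).mul_const (c i)]
  simp only [deriv_mul_const_field]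

lemma deriv_deriv_fun_sum_mul_const {ι : Type*} {s : Finset ι} {g : ι → ℝ → ℝ} {θ : ℝ}
    (h : ∀ i ∈ s, ContDiffAt ℝ 2 (g i) θ) (c : ι → ℝ) :
    deriv (deriv fun t => ∑ i ∈ s, g i t * c i) θ = ∑ i ∈ s, deriv (deriv (g i)) θ * c i := by
  rw [deriv_deriv_fun_sum fun i hi => (h i hi).mul contDiffAt_const]
  simp only [deriv_mul_const_field', deriv_mul_const_field]

noncomputable def fisherInfo {ι : Type*} [Fintype ι] (f : ℝ → ι → ℝ) (θ : ℝ) : ℝ :=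
  -∑ i, f θ i * deriv (deriv fun t => Real.log (f t i)) θ

lemma fisherInfo_eq_sum_sq_div_sub {ι : Type*} [Fintype ι] {f : ℝ → ι → ℝ} {θ : ℝ}
    (hf : ∀ i, ContDiffAt ℝ 2 (fun t => f t i) θ) (hpos : ∀ i, 0 < f θ i) :
    fisherInfo f θ
      = ∑ i, deriv (fun t => f t i) θ ^ 2 / f θ i - ∑ i, deriv (deriv fun t => f t i) θ := by
  simp only [fisherInfo, fun i => mul_deriv_deriv_log (hf i) (hpos i), sum_sub_distrib]
  ring

lemma sum_sq_sum_mul_div_sum_mul_le {X S : Type*} [Fintype X] [Fintype S] {p : X → ℝ}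
    (q : X → ℝ) {k : X → S → ℝ} (hp : ∀ x, 0 < p x) (hk : ∀ x s, 0 < k x s)
    (hksum : ∀ x, ∑ s, k x s = 1) :
    ∑ s, (∑ x, q x * k x s) ^ 2 / ∑ x, p x * k x s ≤ ∑ x, q x ^ 2 / p x :=
  calc ∑ s, (∑ x, q x * k x s) ^ 2 / ∑ x, p x * k x s
      ≤ ∑ s, ∑ x, (q x * k x s) ^ 2 / (p x * k x s) :=
        sum_le_sum fun s _ => sq_sum_div_le_sum_sq_div _ _ fun x _ => mul_pos (hp x) (hk x s)
    _ = ∑ x, ∑ s, q x ^ 2 / p x * k x s := by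
        rw [sum_comm]
        refine sum_congr rfl fun x _ => sum_congr rfl fun s _ => ?_
        field_simp [(hk x s).ne', (hp x).ne']
    _ = ∑ x, q x ^ 2 / p x := by simp only [← mul_sum, hksum, mul_one]

theorem fisher_info_data_processing_general
    {X S : Type*} [Fintype X] [Fintype S] (Θ : Set ℝ)
    (p : ℝ → X → ℝ) (k : X → S → ℝ)
    (hp : ∀ θ ∈ Θ, ∀ x, 0 < p θ x)
    (hdiff : ∀ x, ∀ θ ∈ Θ, ContDiffAt ℝ 2 (fun t => p t x) θ)
    (hk : ∀ x s, 0 < k x s)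
    (hksum : ∀ x, ∑ s, k x s = 1)
    (θ : ℝ) (hθ : θ ∈ Θ) :
    -∑ s, (∑ x, p θ x * k x s) *
        deriv (deriv (fun t => Real.log (∑ x, p t x * k x s))) θ
      ≤ -∑ x, p θ x * deriv (deriv (fun t => Real.log (p t x))) θ := by
  rcases isEmpty_or_nonempty X with _ | _
  · simp
  have hp₂ : ∀ x, ContDiffAt ℝ 2 (fun t => p t x) θ := fun x => hdiff x θ hθ
  have hr₂ (s : S) : ContDiffAt ℝ 2 (fun t => ∑ x, p t x * k x s) θ :=
    ContDiffAt.sum fun x _ => (hp₂ x).mul contDiffAt_const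
  have hr_pos (s : S) : 0 < ∑ x, p θ x * k x s :=
    sum_pos (fun x _ => mul_pos (hp θ hθ x) (hk x s)) univ_nonempty
  have hr'' : ∑ s, deriv (deriv fun t => ∑ x, p t x * k x s) θ
      = ∑ x, deriv (deriv fun t => p t x) θ := by
    simp only [deriv_deriv_fun_sum_mul_const (fun x _ => hp₂ x), sum_comm (γ := S), ← mul_sum,
      hksum, mul_one]
  change fisherInfo (fun t s => ∑ x, p t x * k x s) θ ≤ fisherInfo p θ
  rw [fisherInfo_eq_sum_sq_div_sub hr₂ hr_pos, fisherInfo_eq_sum_sq_div_sub hp₂ (hp θ hθ), hr'',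
    sub_le_sub_iff_right]
  simp only [deriv_fun_sum_mul_const (fun x _ => (hp₂ x).differentiableAt two_ne_zero)]
  exact sum_sq_sum_mul_div_sum_mul_le _ (hp θ hθ) hk hksum

/-- Data-processing inequality for Fisher information (finite case):
if `S` is generated from `X` via a `θ`-independent kernel `k`, then with
`r θ s = ∑ x, p θ x * k x s` we have `I_S(θ) ≤ I_X(θ)`. -/
theorem fisher_info_data_processing
    {X S : Type*} [Fintype X] [Fintype S] (Θ : Set ℝ) (hΘ : IsOpen Θ)
    (p : ℝ → X → ℝ) (k : X → S → ℝ)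
    (hp : ∀ θ ∈ Θ, ∀ x, 0 < p θ x)
    (hpsum : ∀ θ ∈ Θ, ∑ x, p θ x = 1)
    (hdiff : ∀ x, ∀ θ ∈ Θ, ContDiffAt ℝ 2 (fun t => p t x) θ)
    (hk : ∀ x s, 0 < k x s)
    (hksum : ∀ x, ∑ s, k x s = 1)
    (θ : ℝ) (hθ : θ ∈ Θ) :
    -∑ s, (∑ x, p θ x * k x s) *
        deriv (deriv (fun t => Real.log (∑ x, p t x * k x s))) θ
      ≤ -∑ x, p θ x * deriv (deriv (fun t => Real.log (p t x))) θ :=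
  fisher_info_data_processing_general Θ p k hp hdiff hk hksum θ hθ
end

section
/- Score form of the data-processing inequality: with r_θ(s) = ∑_x p_θ(x)k(s|x) and k independent of θ, for each s the squared score of the marginal satisfies r_θ(s)·(∂/∂θ log r_θ(s))² ≤ ∑_x k(s|x)·p_θ(x)·(∂/∂θ log p_θ(x))²; summing over s yields I_S(θ) ≤ I_X(θ) in score form. -/
open Finset

/-!
Since `k` does not depend on `θ`, the score of the marginal is `r' / r` with
`r' = ∑ₓ p'(x) k(s|x)`, so `r (r'/r)² = (∑ₓ p' k)² / ∑ₓ p k`. Sedrakyan's form of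
Cauchy–Schwarz bounds this by `∑ₓ (p' k)² / (p k) = ∑ₓ k p (p'/p)²`, which is the pointwise
claim; summing over `s` and using `∑ₛ k(s|x) = 1` gives `I_S ≤ I_X`.
-/

theorem sum_mul_mul_div_sq_le_of_pos {ι : Type*} (s : Finset ι) (q w a : ι → ℝ)
    (hq : ∀ i ∈ s, 0 < q i) (hw : ∀ i ∈ s, 0 < w i) :
    (∑ i ∈ s, q i * w i) * ((∑ i ∈ s, a i * w i) / ∑ i ∈ s, q i * w i) ^ 2
      ≤ ∑ i ∈ s, w i * q i * (a i / q i) ^ 2 := by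
  have mul_div_sq (c b : ℝ) : c * (b / c) ^ 2 = b ^ 2 / c := by
    rcases eq_or_ne c 0 with rfl | hc
    · simp
    · field_simp
  rw [mul_div_sq]
  refine (sq_sum_div_le_sum_sq_div s _ fun i hi => mul_pos (hq i hi) (hw i hi)).trans_eq ?_
  refine sum_congr rfl fun i hi => ?_
  have hqi := (hq i hi).ne'
  have hwi := (hw i hi).ne'
  field_simp

theorem deriv_log_sum_mul_const {ι : Type*} (s : Finset ι) (p : ℝ → ι → ℝ) (w : ι → ℝ)
    {θ : ℝ} (hd : ∀ i ∈ s, DifferentiableAt ℝ (fun t => p t i) θ)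
    (hr : ∑ i ∈ s, p θ i * w i ≠ 0) :
    deriv (fun t => Real.log (∑ i ∈ s, p t i * w i)) θ
      = (∑ i ∈ s, deriv (fun t => p t i) θ * w i) / ∑ i ∈ s, p θ i * w i := by
  have hsum : HasDerivAt (fun t => ∑ i ∈ s, p t i * w i)
      (∑ i ∈ s, deriv (fun t => p t i) θ * w i) θ :=
    HasDerivAt.fun_sum fun i hi => (hd i hi).hasDerivAt.mul_const (w i)
  exact (hsum.log hr).deriv

theorem mixture_mul_deriv_log_sq_le {ι : Type*} (s : Finset ι) (p : ℝ → ι → ℝ) (w : ι → ℝ)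
    {θ : ℝ} (hp : ∀ i ∈ s, 0 < p θ i) (hw : ∀ i ∈ s, 0 < w i)
    (hd : ∀ i ∈ s, DifferentiableAt ℝ (fun t => p t i) θ) :
    (∑ i ∈ s, p θ i * w i) * deriv (fun t => Real.log (∑ i ∈ s, p t i * w i)) θ ^ 2
      ≤ ∑ i ∈ s, w i * p θ i * deriv (fun t => Real.log (p t i)) θ ^ 2 := by
  rcases s.eq_empty_or_nonempty with rfl | hs
  · simp
  have hr : 0 < ∑ i ∈ s, p θ i * w i := sum_pos (fun i hi => mul_pos (hp i hi) (hw i hi)) hs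
  rw [deriv_log_sum_mul_const s p w hd hr.ne']
  refine (sum_mul_mul_div_sq_le_of_pos s _ w _ hp hw).trans_eq (sum_congr rfl fun i hi => ?_)
  rw [deriv.log (hd i hi) (hp i hi).ne']

theorem score_form_data_processing_general
    {X S : Type*} [Fintype X] [Fintype S] (Θ : Set ℝ)
    (p : ℝ → X → ℝ) (k : X → S → ℝ)
    (hp : ∀ θ ∈ Θ, ∀ x, 0 < p θ x)
    (hdiff : ∀ x, ∀ θ ∈ Θ, DifferentiableAt ℝ (fun t => p t x) θ)
    (hk : ∀ x s, 0 < k x s)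
    (hksum : ∀ x, ∑ s, k x s = 1)
    (θ : ℝ) (hθ : θ ∈ Θ) :
    (∀ s, (∑ x, p θ x * k x s) *
        (deriv (fun t => Real.log (∑ x, p t x * k x s)) θ) ^ 2
      ≤ ∑ x, k x s * p θ x * (deriv (fun t => Real.log (p t x)) θ) ^ 2) ∧
    (∑ s, (∑ x, p θ x * k x s) *
        (deriv (fun t => Real.log (∑ x, p t x * k x s)) θ) ^ 2
      ≤ ∑ x, p θ x * (deriv (fun t => Real.log (p t x)) θ) ^ 2) := by
  have pointwise s := mixture_mul_deriv_log_sq_le univ p (k · s)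
    (fun x _ => hp θ hθ x) (fun x _ => hk x s) (fun x _ => hdiff x θ hθ)
  refine ⟨pointwise, (sum_le_sum fun s _ => pointwise s).trans_eq ?_⟩
  rw [sum_comm]
  simp only [← sum_mul, hksum, one_mul]

/-- Score form of the data-processing inequality: with
`r θ s = ∑ x, p θ x * k x s` and `k` independent of `θ`, for each `s` the squared score
of the marginal satisfies the pointwise bound, and summing over `s` gives
`I_S(θ) ≤ I_X(θ)` in score form. -/
theorem score_form_data_processing
    {X S : Type*} [Fintype X] [Fintype S] (Θ : Set ℝ) (hΘ : IsOpen Θ)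
    (p : ℝ → X → ℝ) (k : X → S → ℝ)
    (hp : ∀ θ ∈ Θ, ∀ x, 0 < p θ x)
    (hdiff : ∀ x, ∀ θ ∈ Θ, DifferentiableAt ℝ (fun t => p t x) θ)
    (hk : ∀ x s, 0 < k x s)
    (hksum : ∀ x, ∑ s, k x s = 1)
    (θ : ℝ) (hθ : θ ∈ Θ) :
    (∀ s, (∑ x, p θ x * k x s) *
        (deriv (fun t => Real.log (∑ x, p t x * k x s)) θ) ^ 2
      ≤ ∑ x, k x s * p θ x * (deriv (fun t => Real.log (p t x)) θ) ^ 2) ∧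
    (∑ s, (∑ x, p θ x * k x s) *
        (deriv (fun t => Real.log (∑ x, p t x * k x s)) θ) ^ 2
      ≤ ∑ x, p θ x * (deriv (fun t => Real.log (p t x)) θ) ^ 2) :=
  score_form_data_processing_general Θ p k hp hdiff hk hksum θ hθ
end
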